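/- Since 𝓗_j(0) = 0 and |𝓗_j| is uniformly bounded, for fixed j, j' and a dyadic sequence a(n) → ∞, the tfBm wavelet cross-covariance across well-separated scales satisfies |𝔼 d_tfBm(2^j,k) d_tfBm(a(n)2^{j'},k')| = o(a(n)^{−1/2}) as n → ∞, uniformly in k, k'. -/

import Mathlib

open MeasureTheory Real Filter Asymptotics

/-- The periodized tfBm spectral density
`f(x) = Σ_ℓ (2π)^{−1} σ²Γ²(H+1/2) |λ²+(x+2πℓ)²|^{−(H+1/2)}`. -/
noncomputable def tfbmSpecDensity (H lam σ2 x : ℝ) : ℝ :=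
  ∑' ℓ : ℤ, (2 * π)⁻¹ * σ2 * (Real.Gamma (H + 1/2)) ^ 2
    * (lam ^ 2 + (x + 2 * π * ℓ) ^ 2) ^ (-(H + 1/2) : ℝ)

/-- Discrete tfBm wavelet cross-spectrum between octaves `j` and `J'` at lag `r`. -/
noncomputable def crossSpecTFBM (HH : ℕ → ℝ → ℂ) (H lam σ2 : ℝ)
    (j J' : ℕ) (r : ℝ) : ℂ :=
  ∫ x in Set.Ioc (-π) π,
    HH j x * (starRingEnd ℂ) (HH J' x) * Complex.exp (Complex.I * (x : ℂ) * (r : ℂ))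
      * ((tfbmSpecDensity H lam σ2 x : ℝ) : ℂ)

/-- Since `𝓗_j(0) = 0` and `|𝓗_j|` is uniformly bounded, for fixed `j, j'` and a dyadic
sequence `a(n) = 2^{m(n)} → ∞`, the tfBm wavelet cross-covariance across well-separated
scales is `o(a(n)^{−1/2})` as `n → ∞`, uniformly in `k, k'`. -/
theorem tfbm_cross_scale_little_o
    (H lam σ2 : ℝ) (hH : 0 < H) (hlam : 0 < lam) (hσ2 : 0 < σ2)
    (α : ℝ) (hα : 1 < α)
    (HH : ℕ → ℝ → ℂ) (φhat ψhat : ℝ → ℂ)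
    (hzero : ∀ J : ℕ, HH J 0 = 0)
    (hcont : ∀ J : ℕ, Continuous (HH J))
    (hbdd : ∃ C : ℝ, ∀ (J : ℕ) (x : ℝ), ‖HH J x‖ ≤ C)
    (hψdecay : ∃ C : ℝ, ∀ x : ℝ, ‖ψhat x‖ * (1 + |x|) ^ α ≤ C)
    (hψint : Integrable ψhat)
    (hφbdd : ∃ C : ℝ, ∀ x : ℝ, ‖φhat x‖ ≤ C)
    (hrep : ∀ (J : ℕ) (x : ℝ),
      HH J x = (((2:ℝ) ^ ((J:ℝ)/2) : ℝ) : ℂ) *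
        ∑' ℓ : ℤ, φhat (x + 2 * π * ℓ)
          * (starRingEnd ℂ) (ψhat ((2:ℝ) ^ J * (x + 2 * π * ℓ))))
    (m : ℕ → ℕ) (hm : Tendsto (fun n => ((2:ℝ) ^ (m n))) atTop atTop)
    (j j' : ℕ) :
    ∃ ε : ℕ → ℝ,
      (ε =o[atTop] fun n => ((2:ℝ) ^ (m n)) ^ (-(1/2) : ℝ)) ∧
      ∀ (n : ℕ) (k k' : ℤ),
        ‖crossSpecTFBM HH H lam σ2 j (j' + m n)
            ((2:ℝ) ^ j * k - (2:ℝ) ^ (j' + m n) * k')‖ ≤ ε n := by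
  obtain ⟨C, hC⟩ := hbdd
  obtain ⟨Cψ, hCψ⟩ := hψdecay
  obtain ⟨Cφ, hCφ⟩ := hφbdd
  have hπ : (0:ℝ) < π := Real.pi_pos
  have hC0 : 0 ≤ C := (norm_nonneg _).trans (hC 0 0)
  have hCφ0 : 0 ≤ Cφ := (norm_nonneg _).trans (hCφ 0)
  have hCψ0 : 0 ≤ Cψ := by
    have h := hCψ 0
    rw [abs_zero, add_zero, Real.one_rpow, mul_one] at h
    exact (norm_nonneg _).trans h
  have hα0 : -α ≤ 0 := by linarith
  -- pointwise decay bound for ψhat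
  have hψ' : ∀ y : ℝ, ‖ψhat y‖ ≤ Cψ * (1 + |y|) ^ (-α) := by
    intro y
    have hp : (0:ℝ) < 1 + |y| := by positivity
    rw [Real.rpow_neg hp.le, ← div_eq_mul_inv, le_div_iff₀ (Real.rpow_pos_of_pos hp α)]
    exact hCψ y
  -- separation of translates from zero
  have hsep : ∀ x : ℝ, |x| ≤ π → ∀ ℓ : ℤ, ℓ ≠ 0 → π * |(ℓ:ℝ)| ≤ |x + 2*π*ℓ| := by
    intro x hx ℓ hℓ
    have hl1 : (1:ℝ) ≤ |(ℓ:ℝ)| := by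
      rw [← Int.cast_abs]
      exact_mod_cast Int.one_le_abs hℓ
    have h3 : |(2*π*(ℓ:ℝ))| ≤ |x + 2*π*ℓ| + |x| := by
      calc |(2*π*(ℓ:ℝ))| = |(x + 2*π*ℓ) - x| := by congr 1; ring
      _ ≤ |x + 2*π*ℓ| + |x| := abs_sub _ _
    rw [abs_mul, abs_of_pos (by positivity : (0:ℝ) < 2*π)] at h3
    nlinarith [abs_nonneg (x + 2*π*(ℓ:ℝ))]
  -- summable weights
  have hS : Summable (fun ℓ : ℤ => |(ℓ:ℝ)| ^ (-α)) := Real.summable_abs_int_rpow hα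
  have hS0 : 0 ≤ ∑' ℓ : ℤ, |(ℓ:ℝ)| ^ (-α) :=
    tsum_nonneg fun ℓ => Real.rpow_nonneg (abs_nonneg _) _
  have hS2sum : Summable (fun ℓ : ℤ => |(ℓ:ℝ)| ^ (-(2*H+1))) :=
    Real.summable_abs_int_rpow (by linarith)
  have hg : 0 < Real.Gamma (H + 1/2) := Real.Gamma_pos_of_pos (by linarith)
  -- the spectral density is nonnegative
  have hfnonneg : ∀ x : ℝ, 0 ≤ tfbmSpecDensity H lam σ2 x := by
    intro x
    apply tsum_nonneg
    intro ℓ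
    have h1 : (0:ℝ) ≤ (2*π)⁻¹ * σ2 * (Real.Gamma (H+1/2))^2 := by positivity
    exact mul_nonneg h1 (Real.rpow_nonneg (by positivity) _)
  -- uniform bound for the spectral density on [-π, π]
  have hfle : ∀ x : ℝ, |x| ≤ π → tfbmSpecDensity H lam σ2 x ≤
      ((2*π)⁻¹ * σ2 * (Real.Gamma (H+1/2))^2) *
        ((lam^2)^(-(H+1/2):ℝ) + π^(-(2*H+1):ℝ) * ∑' ℓ : ℤ, |(ℓ:ℝ)| ^ (-(2*H+1))) := by
    intro x hx
    have hterm : ∀ ℓ : ℤ, (lam^2 + (x + 2*π*ℓ)^2) ^ (-(H+1/2):ℝ) ≤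
        (if ℓ = 0 then (lam^2)^(-(H+1/2):ℝ) else 0) + π^(-(2*H+1):ℝ) * |(ℓ:ℝ)|^(-(2*H+1):ℝ) := by
      intro ℓ
      by_cases hℓ : ℓ = 0
      · subst hℓ
        simp only [if_pos, Int.cast_zero, abs_zero, mul_zero, add_zero]
        rw [Real.zero_rpow (by intro h; nlinarith : (-(2*H+1):ℝ) ≠ 0), mul_zero, add_zero]
        exact Real.rpow_le_rpow_of_nonpos (by positivity) (by nlinarith [sq_nonneg x]) (by linarith)
      · rw [if_neg hℓ, zero_add]
        have h1 := hsep x hx ℓ hℓ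
        have hl0 : (0:ℝ) < |(ℓ:ℝ)| := abs_pos.mpr (Int.cast_ne_zero.mpr hℓ)
        have h2 : (π*|(ℓ:ℝ)|)^2 ≤ lam^2 + (x+2*π*ℓ)^2 := by
          have h2' := pow_le_pow_left₀ (by positivity) h1 2
          rw [sq_abs] at h2'
          nlinarith [sq_nonneg lam]
        have h3 : (lam^2 + (x+2*π*ℓ)^2)^(-(H+1/2):ℝ) ≤ ((π*|(ℓ:ℝ)|)^2)^(-(H+1/2):ℝ) :=
          Real.rpow_le_rpow_of_nonpos (by positivity) h2 (by linarith)
        have h4 : ((π*|(ℓ:ℝ)|)^2)^(-(H+1/2):ℝ) = π^(-(2*H+1):ℝ) * |(ℓ:ℝ)|^(-(2*H+1):ℝ) := by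
          rw [← Real.rpow_natCast (π*|(ℓ:ℝ)|) 2, ← Real.rpow_mul (by positivity),
            show ((2:ℕ):ℝ) * (-(H+1/2)) = -(2*H+1) by push_cast; ring,
            Real.mul_rpow hπ.le (abs_nonneg _)]
        rw [← h4]
        exact h3
    have hMf : Summable (fun ℓ : ℤ => (if ℓ = 0 then (lam^2)^(-(H+1/2):ℝ) else 0)
        + π^(-(2*H+1):ℝ) * |(ℓ:ℝ)|^(-(2*H+1):ℝ)) :=
      ((hasSum_ite_eq (0:ℤ) _).summable).add (hS2sum.mul_left _)
    have hsumf : Summable (fun ℓ : ℤ => (lam^2 + (x + 2*π*ℓ)^2) ^ (-(H+1/2):ℝ)) :=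
      hMf.of_nonneg_of_le (fun ℓ => Real.rpow_nonneg (by positivity) _) hterm
    have hc1 : (0:ℝ) ≤ (2*π)⁻¹ * σ2 * (Real.Gamma (H+1/2))^2 := by positivity
    unfold tfbmSpecDensity
    calc (∑' ℓ : ℤ, (2*π)⁻¹ * σ2 * (Real.Gamma (H+1/2))^2
            * (lam^2 + (x + 2*π*ℓ)^2) ^ (-(H+1/2):ℝ))
        ≤ ∑' ℓ : ℤ, (2*π)⁻¹ * σ2 * (Real.Gamma (H+1/2))^2
            * ((if ℓ = 0 then (lam^2)^(-(H+1/2):ℝ) else 0)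
              + π^(-(2*H+1):ℝ) * |(ℓ:ℝ)|^(-(2*H+1):ℝ)) := by
          apply Summable.tsum_le_tsum _ (hsumf.mul_left _) (hMf.mul_left _)
          intro ℓ
          exact mul_le_mul_of_nonneg_left (hterm ℓ) hc1
      _ = ((2*π)⁻¹ * σ2 * (Real.Gamma (H+1/2))^2) *
            ((lam^2)^(-(H+1/2):ℝ) + π^(-(2*H+1):ℝ) * ∑' ℓ : ℤ, |(ℓ:ℝ)| ^ (-(2*H+1))) := by
          rw [tsum_mul_left, Summable.tsum_add ((hasSum_ite_eq (0:ℤ) _).summable) (hS2sum.mul_left _),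
            (hasSum_ite_eq (0:ℤ) _).tsum_eq, tsum_mul_left]
  -- Bf abbreviation facts
  have hBf0 : 0 ≤ ((2*π)⁻¹ * σ2 * (Real.Gamma (H+1/2))^2) *
      ((lam^2)^(-(H+1/2):ℝ) + π^(-(2*H+1):ℝ) * ∑' ℓ : ℤ, |(ℓ:ℝ)| ^ (-(2*H+1))) :=
    (hfnonneg 0).trans (hfle 0 (by rw [abs_zero]; exact hπ.le))
  -- the key uniform bound on the high-octave filter
  have hHb : ∀ (J : ℕ) (x : ℝ), x ∈ Set.Ioc (-π) π →
      ‖HH J x‖ ≤ (2:ℝ)^(((J:ℕ):ℝ)/2) * ((Cφ*Cψ) *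
        ((1 + (2:ℝ)^J * |x|)^(-α) + ((2:ℝ)^J * π)^(-α) * ∑' ℓ : ℤ, |(ℓ:ℝ)| ^ (-α))) := by
    intro J x hx
    have hxabs : |x| ≤ π := abs_le.mpr ⟨hx.1.le, hx.2⟩
    have hQ0 : (0:ℝ) < (2:ℝ)^J := by positivity
    have hQ1 : (1:ℝ) ≤ (2:ℝ)^J := one_le_pow₀ one_le_two
    rw [hrep J x, norm_mul, Complex.norm_real, Real.norm_eq_abs,
      abs_of_pos (Real.rpow_pos_of_pos two_pos _)]
    apply mul_le_mul_of_nonneg_left _ (Real.rpow_pos_of_pos two_pos _).le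
    have hTle : ∀ ℓ : ℤ, ‖φhat (x + 2*π*ℓ) * (starRingEnd ℂ) (ψhat ((2:ℝ)^J * (x + 2*π*ℓ)))‖ ≤
        Cφ*Cψ * ((if ℓ = 0 then (1 + (2:ℝ)^J * |x|)^(-α) else 0)
          + ((2:ℝ)^J * π)^(-α) * |(ℓ:ℝ)|^(-α)) := by
      intro ℓ
      rw [norm_mul, RCLike.norm_conj]
      have h1 : ‖ψhat ((2:ℝ)^J * (x + 2*π*ℓ))‖ ≤ Cψ * (1 + |(2:ℝ)^J * (x + 2*π*ℓ)|)^(-α) := hψ' _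
      by_cases hℓ : ℓ = 0
      · subst hℓ
        simp only [if_pos, Int.cast_zero, abs_zero, mul_zero, add_zero]
        rw [Real.zero_rpow (by intro h; nlinarith : (-α:ℝ) ≠ 0), mul_zero, add_zero]
        have h2 : ‖ψhat ((2:ℝ)^J * x)‖ ≤ Cψ * (1 + (2:ℝ)^J * |x|)^(-α) := by
          have := hψ' ((2:ℝ)^J * x)
          rwa [abs_mul, abs_of_pos hQ0] at this
        calc ‖φhat x‖ * ‖ψhat ((2:ℝ)^J * x)‖
            ≤ Cφ * (Cψ * (1 + (2:ℝ)^J * |x|)^(-α)) :=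
              mul_le_mul (hCφ x) h2 (norm_nonneg _) hCφ0
          _ = Cφ*Cψ * (1 + (2:ℝ)^J * |x|)^(-α) := by ring
      · rw [if_neg hℓ, zero_add]
        have hl0 : (0:ℝ) < |(ℓ:ℝ)| := abs_pos.mpr (Int.cast_ne_zero.mpr hℓ)
        have hsep' := hsep x hxabs ℓ hℓ
        have h4 : (1 + |(2:ℝ)^J * (x + 2*π*ℓ)|)^(-α) ≤ ((2:ℝ)^J * (π * |(ℓ:ℝ)|))^(-α) := by
          apply Real.rpow_le_rpow_of_nonpos (by positivity) _ hα0
          rw [abs_mul, abs_of_pos hQ0]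
          have := mul_le_mul_of_nonneg_left hsep' hQ0.le
          linarith
        have h5 : ((2:ℝ)^J * (π * |(ℓ:ℝ)|))^(-α) = ((2:ℝ)^J * π)^(-α) * |(ℓ:ℝ)|^(-α) := by
          rw [← mul_assoc, Real.mul_rpow (by positivity) (abs_nonneg _)]
        calc ‖φhat (x + 2*π*ℓ)‖ * ‖ψhat ((2:ℝ)^J * (x + 2*π*ℓ))‖
            ≤ Cφ * (Cψ * (((2:ℝ)^J * π)^(-α) * |(ℓ:ℝ)|^(-α))) := by
              apply mul_le_mul (hCφ _) _ (norm_nonneg _) hCφ0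
              refine h1.trans ?_
              rw [← h5]
              exact mul_le_mul_of_nonneg_left h4 hCψ0
          _ = Cφ*Cψ * (((2:ℝ)^J * π)^(-α) * |(ℓ:ℝ)|^(-α)) := by ring
    have hMsum : Summable (fun ℓ : ℤ => Cφ*Cψ * ((if ℓ = 0 then (1 + (2:ℝ)^J * |x|)^(-α) else 0)
        + ((2:ℝ)^J * π)^(-α) * |(ℓ:ℝ)|^(-α))) :=
      (((hasSum_ite_eq (0:ℤ) _).summable).add (hS.mul_left _)).mul_left _
    have hTs : Summable (fun ℓ : ℤ =>
        ‖φhat (x + 2*π*ℓ) * (starRingEnd ℂ) (ψhat ((2:ℝ)^J * (x + 2*π*ℓ)))‖) :=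
      hMsum.of_nonneg_of_le (fun ℓ => norm_nonneg _) hTle
    calc ‖∑' ℓ : ℤ, φhat (x + 2*π*ℓ) * (starRingEnd ℂ) (ψhat ((2:ℝ)^J * (x + 2*π*ℓ)))‖
        ≤ ∑' ℓ : ℤ, ‖φhat (x + 2*π*ℓ) * (starRingEnd ℂ) (ψhat ((2:ℝ)^J * (x + 2*π*ℓ)))‖ :=
          norm_tsum_le_tsum_norm hTs
      _ ≤ ∑' ℓ : ℤ, Cφ*Cψ * ((if ℓ = 0 then (1 + (2:ℝ)^J * |x|)^(-α) else 0)
            + ((2:ℝ)^J * π)^(-α) * |(ℓ:ℝ)|^(-α)) := Summable.tsum_le_tsum hTle hTs hMsum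
      _ = Cφ*Cψ * ((1 + (2:ℝ)^J * |x|)^(-α)
            + ((2:ℝ)^J * π)^(-α) * ∑' ℓ : ℤ, |(ℓ:ℝ)| ^ (-α)) := by
          rw [tsum_mul_left, Summable.tsum_add ((hasSum_ite_eq (0:ℤ) _).summable) (hS.mul_left _),
            (hasSum_ite_eq (0:ℤ) _).tsum_eq, tsum_mul_left]
  -- integrable weight on ℝ
  have hbase : Integrable (fun u : ℝ => ((1:ℝ) + |u|) ^ (-α)) := by
    have h := integrable_one_add_norm (E := ℝ) (μ := volume) (r := α)
      (by simpa using hα)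
    simpa [Real.norm_eq_abs] using h
  have hwcont : Continuous (fun u : ℝ => ((1:ℝ) + |u|) ^ (-α)) :=
    (continuous_const.add continuous_abs).rpow_const (fun u => Or.inl (show (1:ℝ) + |u| ≠ 0 by positivity))
  -- the rescaled integrals A n
  have hAnn : ∀ n : ℕ, 0 ≤ ∫ u : ℝ, ‖HH j (((2:ℝ)^(j'+m n))⁻¹ * u)‖ * ((1:ℝ)+|u|)^(-α) :=
    fun n => integral_nonneg (fun u => by positivity)
  have hA0 : Tendsto (fun n => ∫ u : ℝ, ‖HH j (((2:ℝ)^(j'+m n))⁻¹ * u)‖ * ((1:ℝ)+|u|)^(-α))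
      atTop (nhds 0) := by
    have h1 : Tendsto (fun n => ((2:ℝ)^(j'+m n))) atTop atTop := by
      simp_rw [pow_add]
      exact hm.const_mul_atTop (pow_pos two_pos j')
    have hc0 : Tendsto (fun n => ((2:ℝ)^(j'+m n))⁻¹) atTop (nhds 0) := h1.inv_tendsto_atTop
    have hDCT := tendsto_integral_of_dominated_convergence (μ := volume)
      (F := fun n (u:ℝ) => ‖HH j (((2:ℝ)^(j'+m n))⁻¹ * u)‖ * ((1:ℝ)+|u|)^(-α))
      (f := fun _ => (0:ℝ)) (bound := fun u => C * ((1:ℝ)+|u|)^(-α))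
      (fun n => (((hcont j).comp (continuous_const.mul continuous_id)).norm.mul
        hwcont).aestronglyMeasurable)
      (hbase.const_mul C)
      (fun n => ae_of_all _ fun u => by
        rw [Real.norm_eq_abs, abs_of_nonneg (by positivity)]
        exact mul_le_mul_of_nonneg_right (hC j _) (Real.rpow_nonneg (by positivity) _))
      (ae_of_all _ fun u => by
        have h2 : Tendsto (fun n => ((2:ℝ)^(j'+m n))⁻¹ * u) atTop (nhds 0) := by
          simpa using hc0.mul_const u
        have h3 : Tendsto (fun n => HH j (((2:ℝ)^(j'+m n))⁻¹ * u)) atTop (nhds 0) := by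
          have := ((hcont j).tendsto 0).comp h2
          rwa [hzero j] at this
        simpa using (h3.norm).mul_const (((1:ℝ)+|u|)^(-α)))
    simpa using hDCT
  -- key scaling algebra
  have hkey : ∀ (N : ℕ) (Z W : ℝ),
      (2:ℝ)^((((j'+N : ℕ)):ℝ)/2) * (((2:ℝ)^(j'+N))⁻¹ * Z + ((2:ℝ)^(j'+N)*π)^(-α) * W)
      = (((2:ℝ)^j')^(-(1/2):ℝ) * Z
          + ((2:ℝ)^j')^((1:ℝ)/2-α) * π^(-α) * ((2:ℝ)^N)^((1:ℝ)-α) * W)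
        * ((2:ℝ)^N)^(-(1/2):ℝ) := by
    intro N Z W
    have hq : (0:ℝ) < (2:ℝ)^j' := by positivity
    have hb : (0:ℝ) < (2:ℝ)^N := by positivity
    have hP : (2:ℝ)^((((j'+N : ℕ)):ℝ)/2) = ((2:ℝ)^j')^((1:ℝ)/2) * ((2:ℝ)^N)^((1:ℝ)/2) := by
      rw [← Real.rpow_natCast (2:ℝ) j', ← Real.rpow_natCast (2:ℝ) N,
        ← Real.rpow_mul (by norm_num : (0:ℝ) ≤ 2), ← Real.rpow_mul (by norm_num : (0:ℝ) ≤ 2),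
        ← Real.rpow_add two_pos]
      congr 1
      push_cast
      ring
    have hQ : ((2:ℝ)^(j'+N) : ℝ) = (2:ℝ)^j' * (2:ℝ)^N := pow_add 2 j' N
    rw [hP, hQ, Real.mul_rpow (by positivity) hπ.le, Real.mul_rpow hq.le hb.le]
    have e1 : ((2:ℝ)^j')^((1:ℝ)/2) * ((2:ℝ)^N)^((1:ℝ)/2) * ((2:ℝ)^j' * (2:ℝ)^N)⁻¹
        = ((2:ℝ)^j')^(-(1/2):ℝ) * ((2:ℝ)^N)^(-(1/2):ℝ) := by
      rw [mul_inv, ← Real.rpow_neg_one ((2:ℝ)^j'), ← Real.rpow_neg_one ((2:ℝ)^N),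
        show ((2:ℝ)^j')^((1:ℝ)/2) * ((2:ℝ)^N)^((1:ℝ)/2)
            * (((2:ℝ)^j')^(-1:ℝ) * ((2:ℝ)^N)^(-1:ℝ))
          = (((2:ℝ)^j')^((1:ℝ)/2) * ((2:ℝ)^j')^(-1:ℝ))
            * (((2:ℝ)^N)^((1:ℝ)/2) * ((2:ℝ)^N)^(-1:ℝ)) from by ring,
        ← Real.rpow_add hq, ← Real.rpow_add hb]
      norm_num
    have e2 : ((2:ℝ)^j')^((1:ℝ)/2) * ((2:ℝ)^N)^((1:ℝ)/2)
          * (((2:ℝ)^j')^(-α) * ((2:ℝ)^N)^(-α) * π^(-α))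
        = ((2:ℝ)^j')^((1:ℝ)/2-α) * π^(-α) * ((2:ℝ)^N)^((1:ℝ)-α) * ((2:ℝ)^N)^(-(1/2):ℝ) := by
      rw [show ((2:ℝ)^j')^((1:ℝ)/2) * ((2:ℝ)^N)^((1:ℝ)/2)
            * (((2:ℝ)^j')^(-α) * ((2:ℝ)^N)^(-α) * π^(-α))
          = (((2:ℝ)^j')^((1:ℝ)/2) * ((2:ℝ)^j')^(-α))
            * (((2:ℝ)^N)^((1:ℝ)/2) * ((2:ℝ)^N)^(-α)) * π^(-α) from by ring,
        ← Real.rpow_add hq, ← Real.rpow_add hb,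
        mul_assoc, mul_assoc, ← Real.rpow_add hb]
      norm_num
      ring_nf
    linear_combination Z * e1 + W * e2
  set SB : ℝ := ((2*π)⁻¹ * σ2 * (Real.Gamma (H+1/2))^2) *
      ((lam^2)^(-(H+1/2):ℝ) + π^(-(2*H+1):ℝ) * ∑' ℓ : ℤ, |(ℓ:ℝ)| ^ (-(2*H+1))) with hSBdef
  set SS : ℝ := ∑' ℓ : ℤ, |(ℓ:ℝ)| ^ (-α) with hSSdef
  -- the candidate sequence
  refine ⟨fun n => SB * (Cφ*Cψ) *
      (((2:ℝ)^j')^(-(1/2):ℝ) * (∫ u : ℝ, ‖HH j (((2:ℝ)^(j'+m n))⁻¹ * u)‖ * ((1:ℝ)+|u|)^(-α))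
        + ((2:ℝ)^j')^((1:ℝ)/2-α) * π^(-α) * ((2:ℝ)^(m n))^((1:ℝ)-α) * (C * SS * (2*π)))
      * ((2:ℝ)^(m n))^(-(1/2):ℝ), ?_, ?_⟩
  · -- little-o
    have hb1 : Tendsto (fun n => ((2:ℝ)^(m n))^((1:ℝ)-α)) atTop (nhds 0) := by
      have h1 : Tendsto (fun x:ℝ => x^(-(α-1))) atTop (nhds 0) :=
        tendsto_rpow_neg_atTop (by linarith)
      have h2 := h1.comp hm
      simp only [Function.comp_def] at h2
      simpa [show -(α-1) = (1:ℝ)-α from by ring] using h2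
    have hρ0 : Tendsto (fun n => SB * (Cφ*Cψ) *
        (((2:ℝ)^j')^(-(1/2):ℝ) * (∫ u : ℝ, ‖HH j (((2:ℝ)^(j'+m n))⁻¹ * u)‖ * ((1:ℝ)+|u|)^(-α))
          + ((2:ℝ)^j')^((1:ℝ)/2-α) * π^(-α) * ((2:ℝ)^(m n))^((1:ℝ)-α) * (C * SS * (2*π))))
        atTop (nhds 0) := by
      have ht := ((hA0.const_mul (((2:ℝ)^j')^(-(1/2):ℝ))).add
        ((hb1.const_mul (((2:ℝ)^j')^((1:ℝ)/2-α) * π^(-α))).mul_const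
          (C * SS * (2*π)))).const_mul (SB * (Cφ*Cψ))
      simp only [mul_zero, zero_mul, add_zero] at ht
      exact ht
    have h1 : (fun n => SB * (Cφ*Cψ) *
        (((2:ℝ)^j')^(-(1/2):ℝ) * (∫ u : ℝ, ‖HH j (((2:ℝ)^(j'+m n))⁻¹ * u)‖ * ((1:ℝ)+|u|)^(-α))
          + ((2:ℝ)^j')^((1:ℝ)/2-α) * π^(-α) * ((2:ℝ)^(m n))^((1:ℝ)-α) * (C * SS * (2*π))))
        =o[atTop] (fun _ : ℕ => (1:ℝ)) := (Asymptotics.isLittleO_one_iff ℝ).mpr hρ0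
    have h2 := h1.mul_isBigO (isBigO_refl (fun n : ℕ => ((2:ℝ)^(m n))^(-(1/2):ℝ)) atTop)
    simpa using h2
  · -- the uniform bound
    intro n k k'
    have hQ0 : (0:ℝ) < (2:ℝ)^(j'+m n) := by positivity
    have hQ1 : (1:ℝ) ≤ (2:ℝ)^(j'+m n) := one_le_pow₀ one_le_two
    have hP0 : (0:ℝ) < (2:ℝ)^((((j'+m n : ℕ)):ℝ)/2) := Real.rpow_pos_of_pos two_pos _
    have hqv0 : (0:ℝ) ≤ ((2:ℝ)^(j'+m n)*π)^(-α) := Real.rpow_nonneg (by positivity) _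
    have hSS0 : (0:ℝ) ≤ SS := hS0
    -- norm of the integrand
    have hnorm : ∀ (rr x : ℝ), ‖HH j x * (starRingEnd ℂ) (HH (j'+m n) x)
        * Complex.exp (Complex.I * (x:ℂ) * (rr:ℂ))
        * ((tfbmSpecDensity H lam σ2 x : ℝ):ℂ)‖
        = ‖HH j x‖ * ‖HH (j'+m n) x‖ * tfbmSpecDensity H lam σ2 x := by
      intro rr x
      rw [norm_mul, norm_mul, norm_mul, RCLike.norm_conj]
      have h2 : ‖Complex.exp (Complex.I * (x:ℂ) * (rr:ℂ))‖ = 1 := by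
        rw [Complex.norm_exp]
        norm_num [Complex.mul_re, Complex.mul_im]
      rw [h2, mul_one, Complex.norm_real, Real.norm_eq_abs, abs_of_nonneg (hfnonneg x)]
    have hwcont2 : Continuous (fun x : ℝ => ((1:ℝ) + (2:ℝ)^(j'+m n) * |x|)^(-α)) :=
      (continuous_const.add (continuous_const.mul continuous_abs)).rpow_const
        (fun x => Or.inl (show (1:ℝ) + (2:ℝ)^(j'+m n) * |x| ≠ 0 by positivity))
    have hInt : Integrable (fun x : ℝ => ‖HH j x‖ * ((1:ℝ) + (2:ℝ)^(j'+m n) * |x|)^(-α)) := by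
      refine (hbase.const_mul C).mono' ((hcont j).norm.mul hwcont2).aestronglyMeasurable
        (ae_of_all _ fun x => ?_)
      rw [Real.norm_eq_abs, abs_of_nonneg (by positivity)]
      refine mul_le_mul (hC j x) (Real.rpow_le_rpow_of_nonpos (by positivity) ?_ hα0)
        (Real.rpow_nonneg (by positivity) _) hC0
      nlinarith [abs_nonneg x]
    have hsubst : (∫ x : ℝ, ‖HH j x‖ * ((1:ℝ) + (2:ℝ)^(j'+m n) * |x|)^(-α))
        = ((2:ℝ)^(j'+m n))⁻¹
          * ∫ u : ℝ, ‖HH j (((2:ℝ)^(j'+m n))⁻¹ * u)‖ * ((1:ℝ)+|u|)^(-α) := by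
      have h0 : ((2:ℝ)^(j'+m n) : ℝ) ≠ 0 := hQ0.ne'
      have hcm := MeasureTheory.Measure.integral_comp_mul_left
        (fun u : ℝ => ‖HH j (((2:ℝ)^(j'+m n))⁻¹ * u)‖ * ((1:ℝ)+|u|)^(-α)) ((2:ℝ)^(j'+m n))
      simp only [inv_mul_cancel_left₀ h0, abs_mul, abs_of_pos hQ0, abs_inv,
        smul_eq_mul] at hcm
      exact hcm
    have hIle : (∫ x in Set.Ioc (-π) π, ‖HH j x‖ * ((1:ℝ) + (2:ℝ)^(j'+m n) * |x|)^(-α))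
        ≤ ((2:ℝ)^(j'+m n))⁻¹
          * ∫ u : ℝ, ‖HH j (((2:ℝ)^(j'+m n))⁻¹ * u)‖ * ((1:ℝ)+|u|)^(-α) := by
      rw [← hsubst]
      exact setIntegral_le_integral hInt (ae_of_all _ fun x => by positivity)
    have hc10 : (0:ℝ) ≤ SB * ((2:ℝ)^((((j'+m n : ℕ)):ℝ)/2) * (Cφ*Cψ)) :=
      mul_nonneg hBf0 (mul_nonneg hP0.le (mul_nonneg hCφ0 hCψ0))
    -- pointwise bound on the integrand
    have hle : ∀ x ∈ Set.Ioc (-π) π,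
        ‖HH j x‖ * ‖HH (j'+m n) x‖ * tfbmSpecDensity H lam σ2 x
        ≤ SB * ((2:ℝ)^((((j'+m n : ℕ)):ℝ)/2) * (Cφ*Cψ))
            * (‖HH j x‖ * ((1:ℝ) + (2:ℝ)^(j'+m n) * |x|)^(-α))
          + SB * ((2:ℝ)^((((j'+m n : ℕ)):ℝ)/2) * (Cφ*Cψ))
            * (C * (((2:ℝ)^(j'+m n)*π)^(-α) * SS)) := by
      intro x hx
      have hxa : |x| ≤ π := abs_le.mpr ⟨hx.1.le, hx.2⟩
      have e1 := hHb (j'+m n) x hx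
      have e2 := hfle x hxa
      have hbnd0 : (0:ℝ) ≤ (2:ℝ)^((((j'+m n : ℕ)):ℝ)/2) * ((Cφ*Cψ) *
          ((1 + (2:ℝ)^(j'+m n) * |x|)^(-α) + ((2:ℝ)^(j'+m n) * π)^(-α) * SS)) := by
        apply mul_nonneg hP0.le
        apply mul_nonneg (mul_nonneg hCφ0 hCψ0)
        apply add_nonneg (Real.rpow_nonneg (by positivity) _)
        exact mul_nonneg hqv0 hSS0
      calc ‖HH j x‖ * ‖HH (j'+m n) x‖ * tfbmSpecDensity H lam σ2 x
          ≤ (‖HH j x‖ * ((2:ℝ)^((((j'+m n : ℕ)):ℝ)/2) * ((Cφ*Cψ) *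
              ((1 + (2:ℝ)^(j'+m n) * |x|)^(-α) + ((2:ℝ)^(j'+m n) * π)^(-α) * SS)))) * SB := by
            apply mul_le_mul (mul_le_mul_of_nonneg_left e1 (norm_nonneg _)) e2 (hfnonneg x)
            exact mul_nonneg (norm_nonneg _) hbnd0
        _ = SB * ((2:ℝ)^((((j'+m n : ℕ)):ℝ)/2) * (Cφ*Cψ))
              * (‖HH j x‖ * ((1:ℝ) + (2:ℝ)^(j'+m n) * |x|)^(-α))
            + (SB * ((2:ℝ)^((((j'+m n : ℕ)):ℝ)/2) * (Cφ*Cψ))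
              * (((2:ℝ)^(j'+m n)*π)^(-α) * SS)) * ‖HH j x‖ := by ring
        _ ≤ SB * ((2:ℝ)^((((j'+m n : ℕ)):ℝ)/2) * (Cφ*Cψ))
              * (‖HH j x‖ * ((1:ℝ) + (2:ℝ)^(j'+m n) * |x|)^(-α))
            + (SB * ((2:ℝ)^((((j'+m n : ℕ)):ℝ)/2) * (Cφ*Cψ))
              * (((2:ℝ)^(j'+m n)*π)^(-α) * SS)) * C := by
            apply add_le_add_right
            exact mul_le_mul_of_nonneg_left (hC j x)
              (mul_nonneg hc10 (mul_nonneg hqv0 hSS0))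
        _ = SB * ((2:ℝ)^((((j'+m n : ℕ)):ℝ)/2) * (Cφ*Cψ))
              * (‖HH j x‖ * ((1:ℝ) + (2:ℝ)^(j'+m n) * |x|)^(-α))
            + SB * ((2:ℝ)^((((j'+m n : ℕ)):ℝ)/2) * (Cφ*Cψ))
              * (C * (((2:ℝ)^(j'+m n)*π)^(-α) * SS)) := by ring
    -- integrability of the dominating function on the interval
    have hG1 : IntegrableOn (fun x : ℝ => SB * ((2:ℝ)^((((j'+m n : ℕ)):ℝ)/2) * (Cφ*Cψ))
        * (‖HH j x‖ * ((1:ℝ) + (2:ℝ)^(j'+m n) * |x|)^(-α))) (Set.Ioc (-π) π) volume :=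
      (continuous_const.mul ((hcont j).norm.mul hwcont2)).integrableOn_Ioc
    have hG2 : IntegrableOn (fun _ : ℝ => SB * ((2:ℝ)^((((j'+m n : ℕ)):ℝ)/2) * (Cφ*Cψ))
        * (C * (((2:ℝ)^(j'+m n)*π)^(-α) * SS))) (Set.Ioc (-π) π) volume :=
      integrableOn_const (by rw [Real.volume_Ioc]; exact ENNReal.ofReal_ne_top)
    unfold crossSpecTFBM
    calc ‖∫ x in Set.Ioc (-π) π, HH j x * (starRingEnd ℂ) (HH (j'+m n) x)
            * Complex.exp (Complex.I * (x:ℂ)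
              * ((((2:ℝ)^j * (k:ℝ) - (2:ℝ)^(j'+m n) * (k':ℝ)) : ℝ):ℂ))
            * ((tfbmSpecDensity H lam σ2 x : ℝ):ℂ)‖
        ≤ ∫ x in Set.Ioc (-π) π, ‖HH j x * (starRingEnd ℂ) (HH (j'+m n) x)
            * Complex.exp (Complex.I * (x:ℂ)
              * ((((2:ℝ)^j * (k:ℝ) - (2:ℝ)^(j'+m n) * (k':ℝ)) : ℝ):ℂ))
            * ((tfbmSpecDensity H lam σ2 x : ℝ):ℂ)‖ := norm_integral_le_integral_norm _
      _ ≤ ∫ x in Set.Ioc (-π) π, (SB * ((2:ℝ)^((((j'+m n : ℕ)):ℝ)/2) * (Cφ*Cψ))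
            * (‖HH j x‖ * ((1:ℝ) + (2:ℝ)^(j'+m n) * |x|)^(-α))
          + SB * ((2:ℝ)^((((j'+m n : ℕ)):ℝ)/2) * (Cφ*Cψ))
            * (C * (((2:ℝ)^(j'+m n)*π)^(-α) * SS))) := by
          refine integral_mono_of_nonneg (ae_of_all _ fun x => norm_nonneg _) (hG1.add hG2)
            ((ae_restrict_iff' measurableSet_Ioc).2 (ae_of_all _ fun x hx => ?_))
          simp only [hnorm]
          exact hle x hx
      _ = SB * ((2:ℝ)^((((j'+m n : ℕ)):ℝ)/2) * (Cφ*Cψ))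
            * (∫ x in Set.Ioc (-π) π, ‖HH j x‖ * ((1:ℝ) + (2:ℝ)^(j'+m n) * |x|)^(-α))
          + SB * ((2:ℝ)^((((j'+m n : ℕ)):ℝ)/2) * (Cφ*Cψ))
            * (C * (((2:ℝ)^(j'+m n)*π)^(-α) * SS)) * (2*π) := by
          rw [integral_add hG1 hG2, MeasureTheory.integral_const_mul, setIntegral_const,
            measureReal_def, Real.volume_Ioc, smul_eq_mul, show π - (-π) = 2*π from by ring,
            ENNReal.toReal_ofReal (by positivity)]
          ring
      _ ≤ SB * ((2:ℝ)^((((j'+m n : ℕ)):ℝ)/2) * (Cφ*Cψ))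
            * (((2:ℝ)^(j'+m n))⁻¹
              * ∫ u : ℝ, ‖HH j (((2:ℝ)^(j'+m n))⁻¹ * u)‖ * ((1:ℝ)+|u|)^(-α))
          + SB * ((2:ℝ)^((((j'+m n : ℕ)):ℝ)/2) * (Cφ*Cψ))
            * (C * (((2:ℝ)^(j'+m n)*π)^(-α) * SS)) * (2*π) :=
          add_le_add_left (mul_le_mul_of_nonneg_left hIle hc10) _
      _ = SB * (Cφ*Cψ) *
            (((2:ℝ)^j')^(-(1/2):ℝ)
              * (∫ u : ℝ, ‖HH j (((2:ℝ)^(j'+m n))⁻¹ * u)‖ * ((1:ℝ)+|u|)^(-α))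
            + ((2:ℝ)^j')^((1:ℝ)/2-α) * π^(-α) * ((2:ℝ)^(m n))^((1:ℝ)-α) * (C * SS * (2*π)))
          * ((2:ℝ)^(m n))^(-(1/2):ℝ) := by
          have hk := hkey (m n)
            (∫ u : ℝ, ‖HH j (((2:ℝ)^(j'+m n))⁻¹ * u)‖ * ((1:ℝ)+|u|)^(-α))
            (C * SS * (2*π))
          calc SB * ((2:ℝ)^((((j'+m n : ℕ)):ℝ)/2) * (Cφ*Cψ))
                * (((2:ℝ)^(j'+m n))⁻¹
                  * ∫ u : ℝ, ‖HH j (((2:ℝ)^(j'+m n))⁻¹ * u)‖ * ((1:ℝ)+|u|)^(-α))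
              + SB * ((2:ℝ)^((((j'+m n : ℕ)):ℝ)/2) * (Cφ*Cψ))
                * (C * (((2:ℝ)^(j'+m n)*π)^(-α) * SS)) * (2*π)
              = SB * (Cφ*Cψ) * ((2:ℝ)^((((j'+m n : ℕ)):ℝ)/2)
                * (((2:ℝ)^(j'+m n))⁻¹
                    * (∫ u : ℝ, ‖HH j (((2:ℝ)^(j'+m n))⁻¹ * u)‖ * ((1:ℝ)+|u|)^(-α))
                  + ((2:ℝ)^(j'+m n)*π)^(-α) * (C * SS * (2*π)))) := by ring
            _ = _ := by rw [hk]; ring
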